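/- arXiv:2601.02025 — 2 statements merged into one kernel-verified Lean document; each statement's English description precedes it below -/
import Mathlib

section
/- Let (Ω, P) be a probability space, let h : ℝ → ℝ be a measurable bounded function with ‖h‖_∞ = sup_{v∈ℝ} |h(v)|, and let U, V, X, Y : Ω → ℝ be square-integrable random variables such that the ℝ²-valued random vector (U, V) is independent of the ℝ²-valued random vector (X, Y). Suppose D ≥ 0 is a real number such that |E[g(X)] − E[g(Y)]| ≤ D for every function g : ℝ → ℝ that is Lipschitz with constant at most 1. Then for every function f : ℝ → ℝ that is Lipschitz with constant at most 1, one has |E[f(U + h(V)·X)] − E[f(U + h(V)·Y)]| ≤ ‖h‖_∞ · D. -/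
open MeasureTheory ProbabilityTheory NNReal

/-!
Condition on `(U, V)`. By independence, the difference of the two expectations is the
`(U, V)`-average of `E[f(u + c X)] - E[f(u + c Y)]` with `c = h(v)`. For fixed `u, c ≠ 0` the
function `x ↦ |c|⁻¹ f(u + c x)` is 1-Lipschitz, so this inner difference is at most
`|c| D ≤ ‖h‖_∞ D`.
-/

section

variable {Ω : Type*} [MeasurableSpace Ω] {P : Measure Ω}

theorem LipschitzWith.integrable_comp {E F : Type*} [NormedAddCommGroup E]
    [NormedAddCommGroup F] [IsFiniteMeasure P] {K : ℝ≥0} {f : E → F} (hf : LipschitzWith K f)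
    {Z : Ω → E} (hZ : Integrable Z P) : Integrable (fun ω => f (Z ω)) P := by
  refine Integrable.mono' ((integrable_const ‖f 0‖).add (hZ.norm.const_mul K))
    (hf.continuous.comp_aestronglyMeasurable hZ.1) (ae_of_all _ fun ω => ?_)
  have hfZ := hf.norm_sub_le (Z ω) 0
  rw [sub_zero] at hfZ
  show ‖f (Z ω)‖ ≤ ‖f 0‖ + K * ‖Z ω‖
  linarith [norm_sub_norm_le (f (Z ω)) (f 0)]

theorem IndepFun.integral_comp_eq_integral_integral {α β E : Type*} [MeasurableSpace α]
    [MeasurableSpace β] [NormedAddCommGroup E] [NormedSpace ℝ E] [IsFiniteMeasure P]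
    {A : Ω → α} {B : Ω → β} (hAB : IndepFun A B P) (hA : AEMeasurable A P)
    (hB : AEMeasurable B P) {F : α × β → E} (hF : StronglyMeasurable F)
    (hFi : Integrable (fun ω => F (A ω, B ω)) P) :
    ∫ ω, F (A ω, B ω) ∂P = ∫ a, ∫ ω, F (a, B ω) ∂P ∂(P.map A) := by
  have hA_B : AEMeasurable (fun ω => (A ω, B ω)) P := hA.prodMk hB
  have hmap := (indepFun_iff_map_prod_eq_prod_map_map hA hB).1 hAB
  have hFi' : Integrable F ((P.map A).prod (P.map B)) := by
    rw [← hmap]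
    exact (integrable_map_measure hF.aestronglyMeasurable hA_B).2 hFi
  rw [← integral_map hA_B hF.aestronglyMeasurable, hmap, integral_prod F hFi']
  congr with a
  exact integral_map hB (hF.comp_measurable measurable_prodMk_left).aestronglyMeasurable

variable {E : Type*} [PseudoMetricSpace E] {X Y : Ω → E} {D : ℝ}

theorem abs_integral_comp_sub_le_of_lipschitzWith
    (hD : ∀ g : E → ℝ, LipschitzWith 1 g → |(∫ ω, g (X ω) ∂P) - ∫ ω, g (Y ω) ∂P| ≤ D)
    {K : ℝ≥0} {g : E → ℝ} (hg : LipschitzWith K g) :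
    |(∫ ω, g (X ω) ∂P) - ∫ ω, g (Y ω) ∂P| ≤ K * D := by
  rcases eq_or_ne K 0 with rfl | hK
  · have hXY : (fun ω => g (X ω)) = fun ω => g (Y ω) := funext fun ω =>
      dist_le_zero.1 (by simpa using hg.dist_le_mul (X ω) (Y ω))
    simp [hXY]
  · have hK₀ : (0 : ℝ) < K := by positivity
    have hg₁ : LipschitzWith 1 fun x => (K : ℝ)⁻¹ * g x := by
      refine LipschitzWith.of_dist_le_mul fun x y => ?_
      rw [Real.dist_eq, ← mul_sub, abs_mul, abs_inv, NNReal.abs_eq, ← Real.dist_eq,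
        NNReal.coe_one, one_mul, inv_mul_le_iff₀ hK₀]
      exact hg.dist_le_mul x y
    have hscaled := hD _ hg₁
    rwa [integral_const_mul, integral_const_mul, ← mul_sub, abs_mul, abs_inv, NNReal.abs_eq,
      inv_mul_le_iff₀ hK₀] at hscaled

theorem abs_integral_comp_affine_sub_le {X Y : Ω → ℝ}
    (hD : ∀ g : ℝ → ℝ, LipschitzWith 1 g → |(∫ ω, g (X ω) ∂P) - ∫ ω, g (Y ω) ∂P| ≤ D)
    {f : ℝ → ℝ} (hf : LipschitzWith 1 f) (u c : ℝ) :
    |(∫ ω, f (u + c * X ω) ∂P) - ∫ ω, f (u + c * Y ω) ∂P| ≤ |c| * D := by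
  have hfc : LipschitzWith ‖c‖₊ fun x => f (u + c * x) := by
    have := hf.comp ((isometry_add_left u).lipschitz.comp (lipschitzWith_smul c))
    rwa [one_mul, one_mul] at this
  simpa using abs_integral_comp_sub_le_of_lipschitzWith hD hfc

end

theorem stmt0_general
    {Ω : Type*} [MeasurableSpace Ω] (P : Measure Ω) [IsProbabilityMeasure P]
    (h : ℝ → ℝ) (hmeas : Measurable h)
    (hbd : BddAbove (Set.range fun v => |h v|))
    (U V X Y : Ω → ℝ)
    (hU : MemLp U 2 P) (hV : MemLp V 2 P) (hX : MemLp X 2 P) (hY : MemLp Y 2 P)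
    (hindep : IndepFun (fun ω => (U ω, V ω)) (fun ω => (X ω, Y ω)) P)
    (D : ℝ)
    (hDbound : ∀ g : ℝ → ℝ, LipschitzWith 1 g →
      |(∫ ω, g (X ω) ∂P) - ∫ ω, g (Y ω) ∂P| ≤ D)
    (f : ℝ → ℝ) (hf : LipschitzWith 1 f) :
    |(∫ ω, f (U ω + h (V ω) * X ω) ∂P) - ∫ ω, f (U ω + h (V ω) * Y ω) ∂P| ≤
      (⨆ v, |h v|) * D := by
  set M := ⨆ v, |h v|
  have hM : ∀ v, |h v| ≤ M := le_ciSup hbd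
  have hD : 0 ≤ D := by
    simpa using hDbound (fun _ => 0) ((LipschitzWith.const 0).weaken zero_le_one)
  have hUi := hU.integrable one_le_two
  have hXi := hX.integrable one_le_two
  have hYi := hY.integrable one_le_two
  have hhV : AEStronglyMeasurable (fun ω => h (V ω)) P :=
    (hmeas.comp_aemeasurable hV.aemeasurable).aestronglyMeasurable
  have hmixed : ∀ Z : Ω → ℝ, Integrable Z P →
      Integrable (fun ω => f (U ω + h (V ω) * Z ω)) P := fun Z hZ =>
    hf.integrable_comp (hUi.add (hZ.bdd_mul hhV (ae_of_all _ fun ω => hM (V ω))))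
  have haffine : ∀ Z : Ω → ℝ, Integrable Z P → ∀ u c : ℝ,
      Integrable (fun ω => f (u + c * Z ω)) P := fun Z hZ u c =>
    hf.integrable_comp ((integrable_const u).add (hZ.const_mul c))
  rw [← integral_sub (hmixed X hXi) (hmixed Y hYi)]
  rw [IndepFun.integral_comp_eq_integral_integral hindep
    (hU.aemeasurable.prodMk hV.aemeasurable) (hX.aemeasurable.prodMk hY.aemeasurable)
    (F := fun p => f (p.1.1 + h p.1.2 * p.2.1) - f (p.1.1 + h p.1.2 * p.2.2))
    (by have := hf.continuous.measurable; fun_prop) ((hmixed X hXi).sub (hmixed Y hYi))]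
  have hUV_prob := Measure.isProbabilityMeasure_map (hU.aemeasurable.prodMk hV.aemeasurable)
  rw [← Real.norm_eq_abs, ← mul_one (M * D), ← probReal_univ (μ := P.map fun ω => (U ω, V ω))]
  refine norm_integral_le_of_norm_le_const (ae_of_all _ fun a => ?_)
  dsimp only
  rw [Real.norm_eq_abs, integral_sub (haffine X hXi _ _) (haffine Y hYi _ _)]
  exact (abs_integral_comp_affine_sub_le hDbound hf a.1 (h a.2)).trans
    (mul_le_mul_of_nonneg_right (hM a.2) hD)

/-- If `(U, V)` is independent of `(X, Y)`, all four variables are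
square-integrable, `h` is a measurable bounded function, and `D` uniformly bounds
`|E[g(X)] - E[g(Y)]|` over all 1-Lipschitz test functions `g`, then for every
1-Lipschitz `f` one has `|E[f(U + h(V)·X)] - E[f(U + h(V)·Y)]| ≤ ‖h‖_∞ · D`,
where `‖h‖_∞ = ⨆ v, |h v|`. -/
theorem stmt0
    {Ω : Type*} [MeasurableSpace Ω] (P : Measure Ω) [IsProbabilityMeasure P]
    (h : ℝ → ℝ) (hmeas : Measurable h)
    (hbd : BddAbove (Set.range fun v => |h v|))
    (U V X Y : Ω → ℝ)
    (hU : MemLp U 2 P) (hV : MemLp V 2 P) (hX : MemLp X 2 P) (hY : MemLp Y 2 P)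
    (hindep : IndepFun (fun ω => (U ω, V ω)) (fun ω => (X ω, Y ω)) P)
    (D : ℝ) (hD : 0 ≤ D)
    (hDbound : ∀ g : ℝ → ℝ, LipschitzWith 1 g →
      |(∫ ω, g (X ω) ∂P) - ∫ ω, g (Y ω) ∂P| ≤ D)
    (f : ℝ → ℝ) (hf : LipschitzWith 1 f) :
    |(∫ ω, f (U ω + h (V ω) * X ω) ∂P) - ∫ ω, f (U ω + h (V ω) * Y ω) ∂P| ≤
      (⨆ v, |h v|) * D :=
  stmt0_general P h hmeas hbd U V X Y hU hV hX hY hindep D hDbound f hf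
end

section
/- Let a be a real number with −1 < a < −1/2 and let u, v be real numbers with u ≠ v. Then ∫_ℝ (u − y)₊^a (v − y)₊^a dy = β(−1 − 2a, a + 1) · |u − v|^{2a+1}, where for a real number x, x₊^a denotes x^a if x > 0 and 0 if x ≤ 0, and β(s, t) = ∫₀¹ r^{s−1}(1 − r)^{t−1} dr denotes the Euler beta function (well-defined here since −1 − 2a > 0 and a + 1 > 0). -/
/-!
The substitution `y = u - (u - v) / r` (for `v < u`) maps `(0, 1)` onto the half-line `y < v`,
outside of which the integrand vanishes. It turns `u - y` into `(u - v) / r` and `v - y` into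
`(u - v) (1 - r) / r`, and with the Jacobian `(u - v) / r²` the integrand becomes
`(u - v) ^ (2a + 1) r ^ (-2a - 2) (1 - r) ^ a`, the beta integrand.
-/

open MeasureTheory

/-- `posPow x a` is `x ^ a` (real power) if `x > 0` and `0` otherwise,
i.e. the "positive part power" `x₊ᵃ`. -/
noncomputable def posPow (x a : ℝ) : ℝ := if 0 < x then x ^ a else 0

open Set

lemma posPow_of_pos {x : ℝ} (hx : 0 < x) (a : ℝ) : posPow x a = x ^ a := if_pos hx

lemma posPow_of_nonpos {x : ℝ} (hx : x ≤ 0) (a : ℝ) : posPow x a = 0 := if_neg (not_lt.2 hx)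

lemma integral_posPow_mul_posPow_eq_setIntegral_Iio (a u v : ℝ) :
    ∫ y, posPow (u - y) a * posPow (v - y) a =
      ∫ y in Iio v, posPow (u - y) a * posPow (v - y) a := by
  refine (setIntegral_eq_integral_of_forall_compl_eq_zero fun y hy => ?_).symm
  rw [posPow_of_nonpos (sub_nonpos.2 (not_lt.1 hy)), mul_zero]

section Substitution

variable (u : ℝ) {c : ℝ}

lemma sub_mul_inv_injective (hc : c ≠ 0) : Function.Injective fun r : ℝ => u - c * r⁻¹ :=
  fun _ _ h => inv_injective (mul_left_cancel₀ hc (sub_right_injective h))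

lemma hasDerivAt_sub_mul_inv {r : ℝ} (hr : r ≠ 0) :
    HasDerivAt (fun r => u - c * r⁻¹) (c * (r ^ 2)⁻¹) r := by
  simpa using ((hasDerivAt_inv hr).const_mul c).const_sub u

lemma image_sub_mul_inv_Ioo_zero_one (hc : 0 < c) :
    (fun r => u - c * r⁻¹) '' Ioo 0 1 = Iio (u - c) := by
  ext y
  constructor
  · rintro ⟨r, ⟨hr0, hr1⟩, rfl⟩
    have : c < c * r⁻¹ := lt_mul_right hc ((one_lt_inv₀ hr0).2 hr1)
    simp only [mem_Iio]
    linarith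
  · intro hy
    have huy : c < u - y := by rw [mem_Iio] at hy; linarith
    refine ⟨c / (u - y), ⟨div_pos hc (hc.trans huy), (div_lt_one (hc.trans huy)).2 huy⟩, ?_⟩
    field_simp
    ring

end Substitution

lemma beta_substitution_integrand {a c r : ℝ} (hc : 0 < c) (hr0 : 0 < r) (hr1 : r < 1) :
    c * (r ^ 2)⁻¹ * ((c * r⁻¹) ^ a * (c * (1 - r) * r⁻¹) ^ a) =
      c ^ (2*a + 1) * (r ^ (-1 - 2*a - 1) * (1 - r) ^ (a + 1 - 1)) := by
  have h1r : 0 < 1 - r := sub_pos.2 hr1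
  have hinv : (r⁻¹) ^ a = r ^ (-a) := by rw [Real.inv_rpow hr0.le, Real.rpow_neg hr0.le]
  have hsq : (r ^ 2)⁻¹ = r ^ (-2 : ℝ) := by
    rw [Real.rpow_neg hr0.le, Real.rpow_two]
  rw [Real.mul_rpow (x := c * (1 - r)) (by positivity) (inv_nonneg.2 hr0.le),
    Real.mul_rpow hc.le h1r.le, Real.mul_rpow hc.le (inv_nonneg.2 hr0.le), hinv, hsq,
    show (-1 - 2*a - 1 : ℝ) = -2 + -a + -a by ring, show (a + 1 - 1 : ℝ) = a by ring,
    show (2*a + 1 : ℝ) = 1 + a + a by ring, Real.rpow_add hc, Real.rpow_add hc, Real.rpow_one,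
    Real.rpow_add hr0, Real.rpow_add hr0]
  ring

lemma integral_posPow_mul_posPow_sub (a u : ℝ) {c : ℝ} (hc : 0 < c) :
    ∫ y, posPow (u - y) a * posPow (u - c - y) a =
      (∫ r in (0:ℝ)..1, r ^ (-1 - 2*a - 1) * (1 - r) ^ (a + 1 - 1)) * c ^ (2*a + 1) := by
  have hsubst := integral_image_eq_integral_abs_deriv_smul
    (measurableSet_Ioo : MeasurableSet (Ioo (0:ℝ) 1))
    (fun r hr => (hasDerivAt_sub_mul_inv u hr.1.ne').hasDerivWithinAt)
    (sub_mul_inv_injective u hc.ne').injOn fun y => posPow (u - y) a * posPow (u - c - y) a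
  have hintegrand : EqOn (fun r => |c * (r ^ 2)⁻¹| •
        (posPow (u - (u - c * r⁻¹)) a * posPow (u - c - (u - c * r⁻¹)) a))
      (fun r => c ^ (2*a + 1) * (r ^ (-1 - 2*a - 1) * (1 - r) ^ (a + 1 - 1))) (Ioo 0 1) := by
    rintro r ⟨hr0, hr1⟩
    have hu : u - (u - c * r⁻¹) = c * r⁻¹ := by ring
    have hv : u - c - (u - c * r⁻¹) = c * (1 - r) * r⁻¹ := by field_simp; ring
    have h1r : 0 < 1 - r := sub_pos.2 hr1
    beta_reduce
    rw [hu, hv, posPow_of_pos (by positivity), posPow_of_pos (by positivity),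
      abs_of_pos (by positivity), smul_eq_mul, beta_substitution_integrand hc hr0 hr1]
  rw [integral_posPow_mul_posPow_eq_setIntegral_Iio, ← image_sub_mul_inv_Ioo_zero_one u hc,
    hsubst, setIntegral_congr_fun measurableSet_Ioo hintegrand, integral_const_mul,
    intervalIntegral.integral_of_le zero_le_one, integral_Ioc_eq_integral_Ioo, mul_comm]

lemma integral_posPow_mul_posPow_of_lt (a : ℝ) {u v : ℝ} (hvu : v < u) :
    ∫ y, posPow (u - y) a * posPow (v - y) a =
      (∫ r in (0:ℝ)..1, r ^ (-1 - 2*a - 1) * (1 - r) ^ (a + 1 - 1)) * (u - v) ^ (2*a + 1) := by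
  simpa only [sub_sub_cancel] using integral_posPow_mul_posPow_sub a u (sub_pos.2 hvu)

theorem stmt2_general (a : ℝ) (u v : ℝ) (huv : u ≠ v) :
    ∫ y : ℝ, posPow (u - y) a * posPow (v - y) a =
      (∫ r in (0:ℝ)..1, r ^ (-1 - 2*a - 1) * (1 - r) ^ (a + 1 - 1)) *
        |u - v| ^ (2*a + 1) := by
  rcases huv.lt_or_gt with h | h
  · simp_rw [mul_comm (posPow (u - _) a)]
    rw [integral_posPow_mul_posPow_of_lt a h, abs_of_neg (sub_neg.2 h), neg_sub]
  · rw [integral_posPow_mul_posPow_of_lt a h, abs_of_pos (sub_pos.2 h)]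

/-- For `-1 < a < -1/2` and `u ≠ v`,
`∫_ℝ (u - y)₊^a (v - y)₊^a dy = β(-1 - 2a, a + 1) · |u - v| ^ (2a + 1)`,
where `β(s, t) = ∫₀¹ r^(s-1) (1-r)^(t-1) dr` is the Euler beta function. -/
theorem stmt2 (a : ℝ) (ha1 : -1 < a) (ha2 : a < -(1/2)) (u v : ℝ) (huv : u ≠ v) :
    ∫ y : ℝ, posPow (u - y) a * posPow (v - y) a =
      (∫ r in (0:ℝ)..1, r ^ (-1 - 2*a - 1) * (1 - r) ^ (a + 1 - 1)) *
        |u - v| ^ (2*a + 1) :=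
  stmt2_general a u v huv
end
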